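/- arXiv:2106.06249 — 3 statements merged into one kernel-verified Lean document; each statement's English description precedes it below -/
import Mathlib

section
/- Let α = v0 x v1 x v2 ... x v_{m_x} be a unary pattern with single variable x and let w be a word with |w| = m' + m_x·ℓ for some ℓ ≥ 0. Then d_H(α, w) = C + min over words u of length ℓ of Σ_{i=1}^{m_x} d_H(u, w_i), where C and the factors w_i are as determined by the alignment, and the minimum is achieved by the positionwise-majority (median) string of w_1, ..., w_{m_x}. -/
/-!
Once `|x| = ℓ` is fixed, the image of the pattern is aligned with `w` block by block, so
`d_H(h(α), w)` splits into the mismatches `C` of the terminal segments plus `Σᵢ d_H(u, wᵢ)`.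
Exchanging the sums over occurrences and positions, `Σᵢ d_H(u, wᵢ) = Σⱼ (m_x - #{i | wᵢ[j] = u[j]})`,
and each column is minimised independently by a most frequent letter.
-/

/-- Hamming distance between equal-length words, as lists. -/
def hdist {σ : Type*} [DecidableEq σ] (u v : List σ) : ℕ :=
  ((List.zip u v).filter fun p => p.1 ≠ p.2).length

/-- The image of the unary pattern v₀ x v₁ x ⋯ x v_{mx} under the substitution x ↦ u. -/
def build {σ : Type*} (mx : ℕ) (v : ℕ → List σ) (u : List σ) : List σ :=
  (List.range mx).flatMap (fun i => v i ++ u) ++ v mx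

/-- The factor of w of length ℓ aligned with the i-th occurrence of x. -/
def wfac {σ : Type*} (v : ℕ → List σ) (ℓ : ℕ) (w : List σ) (i : ℕ) : List σ :=
  (w.drop ((∑ j ∈ Finset.range (i + 1), (v j).length) + i * ℓ)).take ℓ

open Finset

section

variable {σ : Type*}

lemma build_succ (mx : ℕ) (v : ℕ → List σ) (u : List σ) :
    build (mx + 1) v u = v 0 ++ (u ++ build mx (fun i => v (i + 1)) u) := by
  simp only [build, List.range_succ_eq_map, List.flatMap_cons, List.flatMap_map,
    List.append_assoc]

lemma length_build (mx : ℕ) (v : ℕ → List σ) (u : List σ) :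
    (build mx v u).length = ∑ j ∈ range (mx + 1), (v j).length + mx * u.length := by
  induction mx generalizing v with
  | zero => simp [build]
  | succ n ih =>
    rw [build_succ, List.length_append, List.length_append, ih, sum_range_succ' _ (n + 1)]
    ring

lemma wfac_zero (v : ℕ → List σ) (ℓ : ℕ) (w : List σ) :
    wfac v ℓ w 0 = (w.drop (v 0).length).take ℓ := by
  simp [wfac]

lemma wfac_succ (v : ℕ → List σ) (ℓ : ℕ) (w : List σ) (i : ℕ) :
    wfac v ℓ w (i + 1) = wfac (fun j => v (j + 1)) ℓ ((w.drop (v 0).length).drop ℓ) i := by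
  rw [wfac, wfac, List.drop_drop, List.drop_drop, sum_range_succ' _ (i + 1)]
  congr 2
  ring

lemma length_wfac {mx ℓ : ℕ} {v : ℕ → List σ} {w : List σ}
    (hw : w.length = ∑ j ∈ range (mx + 1), (v j).length + mx * ℓ) {i : ℕ} (hi : i < mx) :
    (wfac v ℓ w i).length = ℓ := by
  have hv : ∑ j ∈ range (i + 1), (v j).length ≤ ∑ j ∈ range (mx + 1), (v j).length :=
    sum_le_sum_of_subset (range_subset_range.2 (by omega))
  have hℓ : (i + 1) * ℓ ≤ mx * ℓ := Nat.mul_le_mul_right ℓ hi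
  rw [wfac, List.length_take, List.length_drop, add_mul, one_mul] at *
  omega

lemma length_eq_of_length_build_eq {mx : ℕ} (hmx : 1 ≤ mx) (v : ℕ → List σ) {u u' : List σ}
    (h : (build mx v u).length = (build mx v u').length) : u.length = u'.length := by
  rw [length_build, length_build] at h
  exact Nat.eq_of_mul_eq_mul_left hmx (by omega)

section

variable [DecidableEq σ]

@[simp] lemma hdist_nil_left (w : List σ) : hdist [] w = 0 := rfl

@[simp] lemma hdist_nil_right (u : List σ) : hdist u [] = 0 := by
  simp [hdist]

lemma hdist_cons (a b : σ) (u v : List σ) :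
    hdist (a :: u) (b :: v) = (if a = b then 0 else 1) + hdist u v := by
  by_cases h : a = b <;> simp [hdist, h, add_comm]

lemma hdist_append_left (a b w : List σ) :
    hdist (a ++ b) w = hdist a (w.take a.length) + hdist b (w.drop a.length) := by
  induction a generalizing w with
  | nil => simp
  | cons x a ih =>
    cases w with
    | nil => simp
    | cons y w => simp [hdist_cons, ih, add_assoc]

lemma hdist_eq_sum_range [Inhabited σ] {n : ℕ} {u v : List σ}
    (hu : u.length = n) (hv : v.length = n) :
    hdist u v = ∑ j ∈ range n, if u.getD j default = v.getD j default then 0 else 1 := by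
  induction u generalizing v n with
  | nil => subst hu; simp
  | cons a u ih =>
    obtain _ | ⟨b, v⟩ := v
    · simp at hu hv; omega
    subst hu
    simp only [List.length_cons, add_left_inj] at hv
    rw [hdist_cons, ih rfl hv, List.length_cons, sum_range_succ']
    simp [add_comm]

lemma sum_ite_eq_zero_one_eq_card_sub {ι : Type*} (s : Finset ι) (g : ι → σ) (c : σ) :
    (∑ i ∈ s, if c = g i then 0 else 1) = #s - #{i ∈ s | g i = c} := by
  rw [← card_filter_add_card_filter_not (s := s) (fun i => g i = c), Nat.add_sub_cancel_left,
    sum_ite, sum_const_zero, zero_add, sum_const, smul_eq_mul, mul_one]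
  simp only [eq_comm]

def IsMedian [Inhabited σ] {ι : Type*} (s : Finset ι) (f : ι → List σ) (ℓ : ℕ) (med : List σ) :
    Prop :=
  ∀ j < ℓ, ∀ a : σ,
    #{i ∈ s | (f i).getD j default = a} ≤ #{i ∈ s | (f i).getD j default = med.getD j default}

lemma IsMedian.sum_hdist_le [Inhabited σ] {ι : Type*} {s : Finset ι} {f : ι → List σ} {ℓ : ℕ}
    {med : List σ} (hmed : IsMedian s f ℓ med) (hmedl : med.length = ℓ)
    (hf : ∀ i ∈ s, (f i).length = ℓ) {u : List σ} (hu : u.length = ℓ) :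
    ∑ i ∈ s, hdist med (f i) ≤ ∑ i ∈ s, hdist u (f i) := by
  have hcols : ∀ z : List σ, z.length = ℓ → ∑ i ∈ s, hdist z (f i) =
      ∑ j ∈ range ℓ, (#s - #{i ∈ s | (f i).getD j default = z.getD j default}) := by
    intro z hz
    rw [sum_congr rfl fun i hi => hdist_eq_sum_range hz (hf i hi), sum_comm]
    exact sum_congr rfl fun j _ => sum_ite_eq_zero_one_eq_card_sub s _ _
  rw [hcols med hmedl, hcols u hu]
  exact sum_le_sum fun j hj => Nat.sub_le_sub_left (hmed j (mem_range.1 hj) _) _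

/-- The constant `C`. -/
def fixedMismatch : ℕ → (ℕ → List σ) → ℕ → List σ → ℕ
  | 0, v, _, w => hdist (v 0) w
  | mx + 1, v, ℓ, w =>
      hdist (v 0) (w.take (v 0).length) +
        fixedMismatch mx (fun i => v (i + 1)) ℓ ((w.drop (v 0).length).drop ℓ)

lemma hdist_build {ℓ : ℕ} {u : List σ} (hu : u.length = ℓ) (mx : ℕ) (v : ℕ → List σ)
    (w : List σ) :
    hdist (build mx v u) w = fixedMismatch mx v ℓ w + ∑ i ∈ range mx, hdist u (wfac v ℓ w i) := by
  induction mx generalizing v w with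
  | zero => simp [build, fixedMismatch]
  | succ n ih =>
    rw [build_succ, hdist_append_left, hdist_append_left, ih, sum_range_succ', fixedMismatch,
      wfac_zero, hu]
    simp only [wfac_succ]
    ring

end

end

theorem stmt8_general {σ : Type*} [DecidableEq σ] [Inhabited σ]
    (mx ℓ : ℕ) (hmx : 1 ≤ mx) (v : ℕ → List σ) (w : List σ)
    (m' : ℕ) (hm' : m' = ∑ j ∈ Finset.range (mx + 1), (v j).length)
    (hw : w.length = m' + mx * ℓ) :
    ∃ C : ℕ,
      (∀ u : List σ, u.length = ℓ →
        hdist (build mx v u) w = C + ∑ i ∈ Finset.range mx, hdist u (wfac v ℓ w i)) ∧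
      (∀ med : List σ, med.length = ℓ →
        (∀ j < ℓ, ∀ a : σ,
          ((Finset.range mx).filter fun i => (wfac v ℓ w i).getD j default = a).card ≤
            ((Finset.range mx).filter
              fun i => (wfac v ℓ w i).getD j default = med.getD j default).card) →
        (∀ u : List σ, u.length = ℓ →
          ∑ i ∈ Finset.range mx, hdist med (wfac v ℓ w i) ≤
            ∑ i ∈ Finset.range mx, hdist u (wfac v ℓ w i)) ∧
        sInf {d : ℕ | ∃ u : List σ,
            (build mx v u).length = w.length ∧ d = hdist (build mx v u) w} =
          C + ∑ i ∈ Finset.range mx, hdist med (wfac v ℓ w i)) := by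
  subst hm'
  have hfac : ∀ i ∈ range mx, (wfac v ℓ w i).length = ℓ := fun i hi =>
    length_wfac hw (mem_range.1 hi)
  refine ⟨fixedMismatch mx v ℓ w, fun u hu => hdist_build hu mx v w, fun med hmedl hmed => ?_⟩
  have hmin : ∀ u : List σ, u.length = ℓ → _ := fun u hu =>
    IsMedian.sum_hdist_le (s := range mx) hmed hmedl hfac hu
  refine ⟨hmin, IsLeast.csInf_eq ⟨⟨med, ?_, (hdist_build hmedl mx v w).symm⟩, ?_⟩⟩
  · rw [length_build, hmedl, hw]
  · rintro _ ⟨u, hlen, rfl⟩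
    have hu : u.length = ℓ := by
      rw [hw, ← hmedl, ← length_build] at hlen
      exact (length_eq_of_length_build_eq hmx v hlen).trans hmedl
    rw [hdist_build hu]
    exact Nat.add_le_add_left (hmin u hu) _

/-- For a unary pattern v₀ x v₁ x ⋯ x v_{mx} (mx ≥ 1) and a word w of matching length,
d_H(α, w) = C + min over |u| = ℓ of Σᵢ d_H(u, wᵢ), the minimum being achieved by any
positionwise-majority (median) string of the aligned factors w₁, …, w_{mx}. -/
theorem stmt8 {σ : Type*} [DecidableEq σ] [Fintype σ] [Inhabited σ]
    (mx ℓ : ℕ) (hmx : 1 ≤ mx) (v : ℕ → List σ) (w : List σ)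
    (m' : ℕ) (hm' : m' = ∑ j ∈ Finset.range (mx + 1), (v j).length)
    (hw : w.length = m' + mx * ℓ) :
    ∃ C : ℕ,
      (∀ u : List σ, u.length = ℓ →
        hdist (build mx v u) w = C + ∑ i ∈ Finset.range mx, hdist u (wfac v ℓ w i)) ∧
      (∀ med : List σ, med.length = ℓ →
        (∀ j < ℓ, ∀ a : σ,
          ((Finset.range mx).filter fun i => (wfac v ℓ w i).getD j default = a).card ≤
            ((Finset.range mx).filter
              fun i => (wfac v ℓ w i).getD j default = med.getD j default).card) →
        (∀ u : List σ, u.length = ℓ →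
          ∑ i ∈ Finset.range mx, hdist med (wfac v ℓ w i) ≤
            ∑ i ∈ Finset.range mx, hdist u (wfac v ℓ w i)) ∧
        sInf {d : ℕ | ∃ u : List σ,
            (build mx v u).length = w.length ∧ d = hdist (build mx v u) w} =
          C + ∑ i ∈ Finset.range mx, hdist med (wfac v ℓ w i)) :=
  stmt8_general mx ℓ hmx v w m' hm' hw
end

section
/- Two binary vectors u, v ∈ {0,1}^d are orthogonal (i.e., u[k]·v[k] = 0 for all k) if and only if, for each coordinate k, the pair of 3-letter code words (A'(u[k]), B'(v[k])) has Hamming distance exactly 1, where A'(0) = 001, A'(1) = 100, B'(0) = 000, B'(1) = 011; and if u, v are not orthogonal then for some k the pair has Hamming distance 3. Consequently, d_H(A'(u[1])#A'(u[2])#...#A'(u[d]), B'(v[1])#B'(v[2])#...#B'(v[d])) = d if u and v are orthogonal, and ≥ d + 2 otherwise, where # is a fixed separator string on which the two encodings agree. -/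
/-- The coordinate gadget for vectors in U: A'(0) = 001, A'(1) = 100. -/
def Agad : Bool → List Bool
  | false => [false, false, true]
  | true => [true, false, false]

/-- The coordinate gadget for vectors in V: B'(0) = 000, B'(1) = 011. -/
def Bgad : Bool → List Bool
  | false => [false, false, false]
  | true => [false, true, true]

open Finset

section Hamming

variable {σ : Type*} [DecidableEq σ]

lemma hdist_append {u₁ v₁ : List σ} (u₂ v₂ : List σ) (h : u₁.length = v₁.length) :
    hdist (u₁ ++ u₂) (v₁ ++ v₂) = hdist u₁ v₁ + hdist u₂ v₂ := by
  rw [hdist, hdist, hdist, List.zip_append h, List.filter_append, List.length_append]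

@[simp]
lemma hdist_self (u : List σ) : hdist u u = 0 := by
  induction u with
  | nil => rfl
  | cons a t ih => simpa [hdist] using ih

lemma hdist_intercalate_map {ι : Type*} (sep : List σ) (f g : ι → List σ) (l : List ι)
    (hlen : ∀ i ∈ l, (f i).length = (g i).length) :
    hdist (sep.intercalate (l.map f)) (sep.intercalate (l.map g)) =
      (l.map fun i => hdist (f i) (g i)).sum := by
  induction l with
  | nil => simp [hdist]
  | cons i t ih =>
    cases t with
    | nil => simp
    | cons j t =>
      have hi : (f i ++ sep).length = (g i ++ sep).length := by simp [hlen i (by simp)]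
      have ih' := ih fun k hk => hlen k (List.mem_cons_of_mem i hk)
      simp only [List.map_cons] at ih' ⊢
      rw [List.intercalate_cons_cons, List.intercalate_cons_cons, hdist_append _ _ hi,
        hdist_append _ _ (hlen i (by simp)), hdist_self, ih']
      simp

lemma hdist_intercalate_ofFn {n : ℕ} (sep : List σ) (f g : Fin n → List σ)
    (hlen : ∀ k, (f k).length = (g k).length) :
    hdist (sep.intercalate (List.ofFn f)) (sep.intercalate (List.ofFn g)) =
      ∑ k, hdist (f k) (g k) := by
  rw [List.ofFn_eq_map, List.ofFn_eq_map,
    hdist_intercalate_map sep f g _ fun k _ => hlen k, ← List.ofFn_eq_map, List.sum_ofFn]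

end Hamming

lemma length_Agad_eq_length_Bgad (a b : Bool) : (Agad a).length = (Bgad b).length := by
  cases a <;> cases b <;> rfl

lemma hdist_Agad_Bgad (a b : Bool) :
    hdist (Agad a) (Bgad b) = if a = true ∧ b = true then 3 else 1 := by
  cases a <;> cases b <;> rfl

lemma hdist_intercalate_Agad_Bgad (d : ℕ) (u v : Fin d → Bool) (sep : List Bool) :
    hdist (sep.intercalate (List.ofFn fun k => Agad (u k)))
        (sep.intercalate (List.ofFn fun k => Bgad (v k))) =
      d + 2 * #{k | u k = true ∧ v k = true} := by
  rw [hdist_intercalate_ofFn sep _ _ fun k => length_Agad_eq_length_Bgad _ _]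
  calc ∑ k, hdist (Agad (u k)) (Bgad (v k))
      = ∑ k : Fin d, (1 + 2 * if u k = true ∧ v k = true then 1 else 0) := by
        refine Finset.sum_congr rfl fun k _ => ?_
        rw [hdist_Agad_Bgad]
        split_ifs <;> rfl
    _ = d + 2 * #{k | u k = true ∧ v k = true} := by
        rw [Finset.sum_add_distrib, ← Finset.mul_sum, Finset.sum_boole]
        simp

/-- Orthogonality of binary vectors is characterized by the coordinate gadgets:
each coordinate pair has Hamming distance 1 iff the vectors are orthogonal (distance 3
at some coordinate otherwise), and consequently the separator-joined encodings have
Hamming distance d if orthogonal, and ≥ d + 2 otherwise. -/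
theorem stmt12 (d : ℕ) (u v : Fin d → Bool) (sep : List Bool) :
    ((∀ k, ¬(u k = true ∧ v k = true)) ↔ ∀ k, hdist (Agad (u k)) (Bgad (v k)) = 1) ∧
    (¬(∀ k, ¬(u k = true ∧ v k = true)) → ∃ k, hdist (Agad (u k)) (Bgad (v k)) = 3) ∧
    ((∀ k, ¬(u k = true ∧ v k = true)) →
      hdist (List.intercalate sep (List.ofFn fun k => Agad (u k)))
        (List.intercalate sep (List.ofFn fun k => Bgad (v k))) = d) ∧
    (¬(∀ k, ¬(u k = true ∧ v k = true)) →
      d + 2 ≤ hdist (List.intercalate sep (List.ofFn fun k => Agad (u k)))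
        (List.intercalate sep (List.ofFn fun k => Bgad (v k)))) := by
  simp only [hdist_intercalate_Agad_Bgad, hdist_Agad_Bgad]
  refine ⟨forall_congr' fun k => by split_ifs <;> simp_all, fun h => ?_, fun h => ?_,
    fun h => ?_⟩
  · obtain ⟨k, hk⟩ := not_forall_not.mp h
    exact ⟨k, if_pos hk⟩
  · simp [Finset.filter_eq_empty_iff.mpr fun k _ => h k]
  · obtain ⟨k, hk⟩ := not_forall_not.mp h
    have : 0 < #{k | u k = true ∧ v k = true} := Finset.card_pos.mpr ⟨k, by simpa using hk⟩
    omega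
end

section
/- Every non-cross pattern is 1-local: if α is a pattern such that for any two variables x, y ∈ var(α), all occurrences of x and all occurrences of y are non-interleaved (i.e., scopes of distinct variables are pairwise disjoint), then ordering the variables by the position of their first occurrence gives a marking sequence under which, at each step, the marked variable positions in the variable-skeleton of α form a single contiguous block. -/
/-!
In a non-cross pattern, if some occurrence of `z` precedes some occurrence of `y ≠ z`, then every
occurrence of `z` precedes every occurrence of `y`; in particular the first occurrence of `z`
comes first. Hence a variable written before a marked variable in the skeleton is marked too,
when the marked set is closed downwards in the order of first occurrence: the marked positions
form a prefix of the skeleton, so a fortiori a single block.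
-/

theorem List.exists_getElem?_of_mem_filterMap {α β : Type*} {f : α → Option β} {l : List α}
    {b : β} (h : b ∈ l.filterMap f) : ∃ (i : ℕ) (a : α), l[i]? = some a ∧ f a = some b := by
  obtain ⟨a, ha, hfa⟩ := List.mem_filterMap.mp h
  obtain ⟨i, hi, rfl⟩ := List.getElem_of_mem ha
  exact ⟨i, _, List.getElem?_eq_getElem hi, hfa⟩

theorem List.exists_lt_of_filterMap_getElem? {α β : Type*} {f : α → Option β} {l : List α}
    {j j' : ℕ} {b b' : β} (hjj : j < j') (hb : (l.filterMap f)[j]? = some b)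
    (hb' : (l.filterMap f)[j']? = some b') :
    ∃ i i' : ℕ, i < i' ∧ (∃ a, l[i]? = some a ∧ f a = some b) ∧
      ∃ a', l[i']? = some a' ∧ f a' = some b' := by
  obtain ⟨l₁, l₂, rfl, h₁, h₂⟩ :=
    List.filterMap_eq_append_iff.mp (List.take_append_drop (j + 1) (l.filterMap f)).symm
  have hb₁ : b ∈ l₁.filterMap f := by
    rw [h₁]
    exact List.mem_of_getElem? (i := j) (by rwa [List.getElem?_take_of_lt (by omega)])
  have hb₂ : b' ∈ l₂.filterMap f := by
    rw [h₂]
    exact List.mem_of_getElem? (i := j' - (j + 1))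
      (by rwa [List.getElem?_drop, Nat.add_sub_cancel' hjj])
  obtain ⟨i, a, ha, hfa⟩ := List.exists_getElem?_of_mem_filterMap hb₁
  obtain ⟨i', a', ha', hfa'⟩ := List.exists_getElem?_of_mem_filterMap hb₂
  have hi : i < l₁.length := (List.getElem?_eq_some_iff.mp ha).1
  refine ⟨i, l₁.length + i', by omega, ⟨a, ?_, hfa⟩, a', ?_, hfa'⟩
  · rwa [List.getElem?_append_left hi]
  · rwa [List.getElem?_append_right (by omega), Nat.add_sub_cancel_left]

def occurrences {σ V : Type*} (α : List (σ ⊕ V)) (x : V) : Set ℕ :=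
  {i | α[i]? = some (Sum.inr x)}

theorem sInf_occurrences_le_of_lt {σ V : Type*} {α : List (σ ⊕ V)}
    (noncross : ∀ x y : V, x ≠ y →
      (∀ i j : ℕ, α[i]? = some (Sum.inr x) → α[j]? = some (Sum.inr y) → i < j) ∨
      (∀ i j : ℕ, α[i]? = some (Sum.inr x) → α[j]? = some (Sum.inr y) → j < i))
    {x y : V} (hxy : x ≠ y) {i i' : ℕ} (hi : i ∈ occurrences α x) (hi' : i' ∈ occurrences α y)
    (hlt : i < i') : sInf (occurrences α x) ≤ sInf (occurrences α y) := by
  rcases noncross x y hxy with before | after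
  · exact (before _ _ (Nat.sInf_mem ⟨i, hi⟩) (Nat.sInf_mem ⟨i', hi'⟩)).le
  · exact absurd (after i i' hi hi') hlt.not_gt

/-- Every non-cross pattern is 1-local: if the scopes of distinct variables of α are
pairwise disjoint (no interleaving of occurrences), then for every set S of variables
that is downward closed w.r.t. the order of first occurrence (i.e. marking the variables
in order of first occurrence), the S-marked positions of the variable skeleton of α form
one contiguous block. -/
theorem stmt18 {σ V : Type*} (α : List (σ ⊕ V))
    (noncross : ∀ x y : V, x ≠ y →
      (∀ i j : ℕ, α[i]? = some (Sum.inr x) → α[j]? = some (Sum.inr y) → i < j) ∨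
      (∀ i j : ℕ, α[i]? = some (Sum.inr x) → α[j]? = some (Sum.inr y) → j < i)) :
    ∀ S : Set V,
      (∀ x y : V, (∃ i : ℕ, α[i]? = some (Sum.inr x)) → y ∈ S →
        sInf {i : ℕ | α[i]? = some (Sum.inr x)} ≤ sInf {i : ℕ | α[i]? = some (Sum.inr y)} →
        x ∈ S) →
      ∀ j₁ j₂ j₃ : ℕ, j₁ ≤ j₂ → j₂ ≤ j₃ →
        (∃ x ∈ S, (α.filterMap Sum.getRight?)[j₁]? = some x) →
        (∃ x ∈ S, (α.filterMap Sum.getRight?)[j₃]? = some x) →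
        (∃ x ∈ S, (α.filterMap Sum.getRight?)[j₂]? = some x) := by
  rintro S closed j₁ j₂ j₃ - h23 - ⟨y, hyS, hy⟩
  rcases h23.eq_or_lt with rfl | h23
  · exact ⟨y, hyS, hy⟩
  obtain ⟨z, hz⟩ : ∃ z, (α.filterMap Sum.getRight?)[j₂]? = some z := by
    have := (List.getElem?_eq_some_iff.mp hy).1
    exact ⟨_, List.getElem?_eq_getElem (by omega)⟩
  by_cases hzy : z = y
  · exact ⟨z, hzy ▸ hyS, hz⟩
  obtain ⟨i, i', hii, ⟨_, hi, hz'⟩, _, hi', hy'⟩ := List.exists_lt_of_filterMap_getElem? h23 hz hy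
  rw [Sum.getRight?_eq_some_iff] at hz' hy'
  subst hz' hy'
  exact ⟨z, closed z y ⟨i, hi⟩ hyS (sInf_occurrences_le_of_lt noncross hzy hi hi' hii), hz⟩
end
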